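/- Fix c₃ ∈ ℝ, c₄ > 0, y > 0, and η > 0, and define A(x,y) := (1/(2π)) ∫_ℝ e^{x(η+iθ)} e^{-c₃ y (η+iθ)³} e^{-c₄ y (η+iθ)⁴} dθ/(η+iθ). Then the value of A(x,y) is independent of the choice of η > 0, A is differentiable in x with ∂A/∂x (x,y) = (1/(2π)) ∫_ℝ e^{ixθ} e^{-c₃ y (iθ)³} e^{-c₄ y (iθ)⁴} dθ, and A(x,y) → 0 as x → -∞ for each fixed y > 0. -/

import Mathlib

open Filter

/-- The activation function
`A_η(x,y) = (1/2π) ∫_ℝ e^{x(η+iθ)} e^{-c₃y(η+iθ)³} e^{-c₄y(η+iθ)⁴} dθ/(η+iθ)`. -/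
noncomputable def activationFun (c₃ c₄ η x y : ℝ) : ℂ :=
  (1 / (2 * Real.pi) : ℂ) * ∫ θ : ℝ,
    Complex.exp ((x : ℂ) * ((η : ℂ) + Complex.I * (θ : ℂ))) *
      Complex.exp (-(c₃ : ℂ) * (y : ℂ) * ((η : ℂ) + Complex.I * (θ : ℂ)) ^ 3) *
      Complex.exp (-(c₄ : ℂ) * (y : ℂ) * ((η : ℂ) + Complex.I * (θ : ℂ)) ^ 4)
      / ((η : ℂ) + Complex.I * (θ : ℂ))

/-!
The phase `xz - c₃yz³ - c₄yz⁴` has real part at most `x Re z + C - (Im z)²` on any vertical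
strip, since its `-c₄y (Im z)⁴` term dominates. So the integrands decay like a Gaussian in
`Im z`, uniformly on strips, and Cauchy's theorem on rectangles `[a, b] × [-T, T]` with
`T → ∞` shows that integrals over vertical lines do not depend on the line, as long as the
strip between them avoids the pole of `1/z`. Differentiating in `x` under the integral cancels
the factor `1/z`, after which the line can be moved onto the imaginary axis; the factor
`e^{x Re z} = e^{xη}` gives the decay as `x → -∞`.
-/

open MeasureTheory Set Complex Topology
open scoped Interval

theorem mul_sub_mul_sq_le {a : ℝ} (ha : 0 < a) (B u : ℝ) :
    B * u - a * u ^ 2 ≤ (B + 1) ^ 2 / (4 * a) - u := by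
  have key : (B + 1) ^ 2 / (4 * a) - u - (B * u - a * u ^ 2)
      = (2 * a * u - (B + 1)) ^ 2 / (4 * a) := by
    field_simp; ring
  linarith [key ▸ (by positivity : 0 ≤ (2 * a * u - (B + 1)) ^ 2 / (4 * a))]

theorem re_neg_cubic_sub_quartic_le {p q R : ℝ} (hq : 0 < q) {z : ℂ} (hz : |z.re| ≤ R) :
    (-(p : ℂ) * z ^ 3 - q * z ^ 4).re
      ≤ |p| * R ^ 3 + (3 * |p| * R + 6 * q * R ^ 2 + 1) ^ 2 / (4 * q) - z.im ^ 2 := by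
  set s := z.re
  set t := z.im
  have hre : (-(p : ℂ) * z ^ 3 - q * z ^ 4).re
      = -p * s ^ 3 + 3 * (p * s) * t ^ 2 - q * s ^ 4 + 6 * q * s ^ 2 * t ^ 2 - q * t ^ 4 := by
    simp [s, t, pow_succ, mul_re, mul_im]; ring
  have h1 : -p * s ^ 3 ≤ |p| * R ^ 3 := by
    calc -p * s ^ 3 ≤ |p * s ^ 3| := by rw [neg_mul]; exact neg_le_abs _
      _ = |p| * |s| ^ 3 := by rw [abs_mul, abs_pow]
      _ ≤ |p| * R ^ 3 := by gcongr
  have h2 : p * s ≤ |p| * R := (le_abs_self _).trans (by rw [abs_mul]; gcongr)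
  have h3 : s ^ 2 ≤ R ^ 2 := by rw [← sq_abs]; gcongr
  have h4 := mul_sub_mul_sq_le hq (3 * |p| * R + 6 * q * R ^ 2) (t ^ 2)
  have h2' := mul_le_mul_of_nonneg_right h2 (sq_nonneg t)
  have h3' := mul_le_mul_of_nonneg_left (mul_le_mul_of_nonneg_right h3 (sq_nonneg t)) hq.le
  have hs4 : 0 ≤ q * s ^ 4 := by positivity
  rw [hre]
  linarith

theorem integrable_exp_neg_sq : Integrable fun t : ℝ => Real.exp (-t ^ 2) := by
  simpa using integrable_exp_neg_mul_sq one_pos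

theorem tendsto_exp_neg_sq_cocompact :
    Tendsto (fun t : ℝ => Real.exp (-t ^ 2)) (cocompact ℝ) (𝓝 0) := by
  simpa using tendsto_rpow_abs_mul_exp_neg_mul_sq_cocompact one_pos 0

theorem norm_div_le_of_le_re {w z : ℂ} {m : ℝ} (hm : 0 < m) (hz : m ≤ z.re) :
    ‖w / z‖ ≤ ‖w‖ / m := by
  rw [norm_div]; gcongr; exact hz.trans (re_le_norm z)

theorem integral_vertical_eq_of_norm_le {E : Type*} [NormedAddCommGroup E] [NormedSpace ℂ E]
    [CompleteSpace E] {f : ℂ → E} {g : ℝ → ℝ} {a b : ℝ}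
    (hf : DifferentiableOn ℂ f (re ⁻¹' [[a, b]]))
    (hfg : ∀ z : ℂ, z.re ∈ [[a, b]] → ‖f z‖ ≤ g z.im)
    (hg : Integrable g) (hg0 : Tendsto g (cocompact ℝ) (𝓝 0)) :
    ∫ y : ℝ, f (a + y * I) = ∫ y : ℝ, f (b + y * I) := by
  have hline : ∀ c ∈ [[a, b]], Integrable fun y : ℝ => f ((c : ℂ) + y * I) := by
    intro c hc
    refine hg.mono' ?_ (Eventually.of_forall fun y => ?_)
    · exact (hf.continuousOn.comp_continuous (by fun_prop)
        fun y => by simpa using hc).aestronglyMeasurable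
    · simpa using hfg ((c : ℂ) + y * I) (by simpa using hc)
  have hhor : ∀ l ≤ cocompact ℝ,
      Tendsto (fun T : ℝ => ∫ x in a..b, f (x + T * I)) l (𝓝 0) := by
    intro l hl
    refine squeeze_zero_norm
      (fun T => intervalIntegral.norm_integral_le_of_norm_le_const fun x hx => ?_)
      (by simpa using (hg0.mono_left hl).mul_const |b - a|)
    simpa using hfg ((x : ℂ) + T * I) (by simpa using uIoc_subset_uIcc hx)
  have hrect : ∀ T : ℝ, (∫ x in a..b, f (x + -T * I)) - (∫ x in a..b, f (x + T * I)) +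
      I • (∫ y in -T..T, f (b + y * I)) - I • (∫ y in -T..T, f (a + y * I)) = 0 := by
    intro T
    simpa using integral_boundary_rect_eq_zero_of_differentiableOn f (a - T * I) (b + T * I)
      (hf.mono fun z hz => by simpa using hz.1)
  have hlim := ((((hhor _ atBot_le_cocompact).comp tendsto_neg_atTop_atBot).sub
    (hhor _ atTop_le_cocompact)).add ((intervalIntegral_tendsto_integral
      (hline b right_mem_uIcc) tendsto_neg_atTop_atBot tendsto_id).const_smul I)).sub
    ((intervalIntegral_tendsto_integral
      (hline a left_mem_uIcc) tendsto_neg_atTop_atBot tendsto_id).const_smul I)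
  have h0 := tendsto_nhds_unique hlim <| by
    simp only [Function.comp_def, id, ofReal_neg, hrect]; exact tendsto_const_nhds
  rw [sub_zero, zero_add, sub_eq_zero, smul_right_inj I_ne_zero] at h0
  exact h0.symm

noncomputable def greenKernel (c₃ c₄ x y : ℝ) (z : ℂ) : ℂ :=
  Complex.exp ((x : ℂ) * z) * Complex.exp (-(c₃ : ℂ) * (y : ℂ) * z ^ 3) *
    Complex.exp (-(c₄ : ℂ) * (y : ℂ) * z ^ 4)

section greenKernel

variable {c₃ c₄ y : ℝ}

theorem differentiable_greenKernel (x : ℝ) : Differentiable ℂ (greenKernel c₃ c₄ x y) := by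
  unfold greenKernel; fun_prop

theorem continuous_greenKernel_vertical (x η : ℝ) :
    Continuous fun θ : ℝ => greenKernel c₃ c₄ x y (η + θ * I) :=
  (differentiable_greenKernel x).continuous.comp (by fun_prop)

theorem norm_greenKernel_le (hc : 0 < c₄ * y) (R : ℝ) :
    ∃ C, 0 ≤ C ∧ ∀ (x : ℝ) (z : ℂ), |z.re| ≤ R →
      ‖greenKernel c₃ c₄ x y z‖ ≤ C * Real.exp (x * z.re) * Real.exp (-z.im ^ 2) := by
  refine ⟨Real.exp (|c₃ * y| * R ^ 3 +
    (3 * |c₃ * y| * R + 6 * (c₄ * y) * R ^ 2 + 1) ^ 2 / (4 * (c₄ * y))), by positivity,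
    fun x z hz => ?_⟩
  have hK : greenKernel c₃ c₄ x y z = Complex.exp (x * z) *
      Complex.exp (-((c₃ * y : ℝ) : ℂ) * z ^ 3 - ((c₄ * y : ℝ) : ℂ) * z ^ 4) := by
    rw [greenKernel, mul_assoc, ← Complex.exp_add]; push_cast; ring_nf
  rw [hK, norm_mul, Complex.norm_exp, Complex.norm_exp, re_ofReal_mul, mul_right_comm,
    ← Real.exp_add, ← Real.exp_add, ← Real.exp_add]
  exact Real.exp_le_exp.2 (by linarith [re_neg_cubic_sub_quartic_le (p := c₃ * y) hc hz])

theorem norm_greenKernel_le_gaussian (hc : 0 < c₄ * y) (X R : ℝ) :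
    ∃ C, ∀ (x : ℝ) (z : ℂ), |x| ≤ X → |z.re| ≤ R →
      ‖greenKernel c₃ c₄ x y z‖ ≤ C * Real.exp (-z.im ^ 2) := by
  obtain ⟨C, hC0, hC⟩ := norm_greenKernel_le (c₃ := c₃) hc R
  refine ⟨C * Real.exp (X * R), fun x z hx hz => (hC x z hz).trans ?_⟩
  have hxz : x * z.re ≤ X * R := (le_abs_self _).trans <| by
    rw [abs_mul]; exact mul_le_mul hx hz (abs_nonneg _) ((abs_nonneg x).trans hx)
  gcongr

theorem hasDerivAt_greenKernel_div {z : ℂ} (hz : z ≠ 0) (x : ℝ) :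
    HasDerivAt (fun x' : ℝ => greenKernel c₃ c₄ x' y z / z) (greenKernel c₃ c₄ x y z) x := by
  have h : HasDerivAt (fun w : ℂ => Complex.exp (w * z)) (Complex.exp (x * z) * (1 * z)) x :=
    ((hasDerivAt_id _).mul_const z).cexp
  refine (((h.comp_ofReal.mul_const (Complex.exp (-(c₃ : ℂ) * (y : ℂ) * z ^ 3))).mul_const
    (Complex.exp (-(c₄ : ℂ) * (y : ℂ) * z ^ 4))).div_const z).congr_deriv ?_
  rw [greenKernel]
  field_simp

theorem activationFun_eq (η x : ℝ) :
    activationFun c₃ c₄ η x y = (1 / (2 * Real.pi) : ℂ) *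
      ∫ θ : ℝ, greenKernel c₃ c₄ x y (η + θ * I) / (η + θ * I) := by
  simp only [mul_comm _ I]; rfl

theorem integral_greenKernel_vertical_eq (hc : 0 < c₄ * y) (x a b : ℝ) :
    ∫ θ : ℝ, greenKernel c₃ c₄ x y (a + θ * I) = ∫ θ : ℝ, greenKernel c₃ c₄ x y (b + θ * I) := by
  obtain ⟨C, hC⟩ := norm_greenKernel_le_gaussian (c₃ := c₃) hc |x| (|a| + |b|)
  refine integral_vertical_eq_of_norm_le (differentiable_greenKernel x).differentiableOn
    (fun z hz => hC x z le_rfl ?_) (integrable_exp_neg_sq.const_mul C)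
    (by simpa using tendsto_exp_neg_sq_cocompact.const_mul C)
  rw [abs_le]
  rcases mem_uIcc.1 hz with ⟨h₁, h₂⟩ | ⟨h₁, h₂⟩ <;> constructor <;>
    linarith [le_abs_self a, neg_abs_le a, le_abs_self b, neg_abs_le b]

theorem integral_greenKernel_div_vertical_eq (hc : 0 < c₄ * y) (x : ℝ) {a b : ℝ} (ha : 0 < a)
    (hb : 0 < b) :
    ∫ θ : ℝ, greenKernel c₃ c₄ x y (a + θ * I) / (a + θ * I)
      = ∫ θ : ℝ, greenKernel c₃ c₄ x y (b + θ * I) / (b + θ * I) := by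
  obtain ⟨C, hC⟩ := norm_greenKernel_le_gaussian (c₃ := c₃) hc |x| (a + b)
  have hm : 0 < min a b := lt_min ha hb
  have hre : ∀ z : ℂ, z.re ∈ [[a, b]] → min a b ≤ z.re ∧ |z.re| ≤ a + b := by
    intro z hz
    refine ⟨hz.1, ?_⟩
    rw [abs_of_pos (hm.trans_le hz.1)]
    exact hz.2.trans (max_le_add_of_nonneg ha.le hb.le)
  refine integral_vertical_eq_of_norm_le (f := fun z => greenKernel c₃ c₄ x y z / z)
    (g := fun t => C / min a b * Real.exp (-t ^ 2)) ?_ (fun z hz => ?_)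
    (integrable_exp_neg_sq.const_mul _) (by simpa using tendsto_exp_neg_sq_cocompact.const_mul _)
  · exact (differentiable_greenKernel x).differentiableOn.div differentiableOn_id
      fun z hz => ne_of_apply_ne re (((hre z hz).1.trans_lt' hm).ne')
  · calc ‖greenKernel c₃ c₄ x y z / z‖ ≤ ‖greenKernel c₃ c₄ x y z‖ / min a b :=
          norm_div_le_of_le_re hm (hre z hz).1
      _ ≤ C * Real.exp (-z.im ^ 2) / min a b := by gcongr; exact hC x z le_rfl (hre z hz).2
      _ = C / min a b * Real.exp (-z.im ^ 2) := by ring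

theorem hasDerivAt_integral_greenKernel_div (hc : 0 < c₄ * y) {η : ℝ} (hη : 0 < η) (x : ℝ) :
    HasDerivAt (fun x' : ℝ => ∫ θ : ℝ, greenKernel c₃ c₄ x' y (η + θ * I) / (η + θ * I))
      (∫ θ : ℝ, greenKernel c₃ c₄ x y (η + θ * I)) x := by
  obtain ⟨C, hC⟩ := norm_greenKernel_le_gaussian (c₃ := c₃) hc (|x| + 1) η
  have hre : ∀ θ : ℝ, ((η : ℂ) + θ * I).re = η := by simp
  have hne : ∀ θ : ℝ, (η : ℂ) + θ * I ≠ 0 := fun θ h => hη.ne' (by simpa using congrArg re h)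
  have hcont : ∀ x', Continuous fun θ : ℝ => greenKernel c₃ c₄ x' y (η + θ * I) :=
    fun x' => continuous_greenKernel_vertical x' η
  have hbound : ∀ x', |x'| ≤ |x| + 1 → ∀ θ : ℝ,
      ‖greenKernel c₃ c₄ x' y (η + θ * I)‖ ≤ C * Real.exp (-θ ^ 2) := fun x' hx' θ => by
    simpa using hC x' ((η : ℂ) + θ * I) hx' (by rw [hre, abs_of_pos hη])
  refine (hasDerivAt_integral_of_dominated_loc_of_deriv_le (s := {x' | |x'| < |x| + 1})
    (F := fun x' θ => greenKernel c₃ c₄ x' y (η + θ * I) / (η + θ * I))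
    (F' := fun x' θ => greenKernel c₃ c₄ x' y (η + θ * I))
    (bound := fun θ => C * Real.exp (-θ ^ 2)) ?_ ?_ ?_ (hcont x).aestronglyMeasurable ?_
    (integrable_exp_neg_sq.const_mul C) ?_).2
  · exact (isOpen_lt continuous_abs continuous_const).mem_nhds (by simp)
  · exact Eventually.of_forall fun x' => ((hcont x').div (by fun_prop) hne).aestronglyMeasurable
  · refine (integrable_exp_neg_sq.const_mul (C / η)).mono'
      ((hcont x).div (by fun_prop) hne).aestronglyMeasurable (Eventually.of_forall fun θ => ?_)
    calc ‖greenKernel c₃ c₄ x y (η + θ * I) / (η + θ * I)‖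
        ≤ ‖greenKernel c₃ c₄ x y (η + θ * I)‖ / η := norm_div_le_of_le_re hη (hre θ).ge
      _ ≤ C * Real.exp (-θ ^ 2) / η := by gcongr; exact hbound x (by linarith) θ
      _ = C / η * Real.exp (-θ ^ 2) := by ring
  · exact Eventually.of_forall fun θ x' hx' => hbound x' (le_of_lt hx') θ
  · exact Eventually.of_forall fun θ x' _ => hasDerivAt_greenKernel_div (hne θ) x'

theorem hasDerivAt_activationFun (hc : 0 < c₄ * y) {η : ℝ} (hη : 0 < η) (x : ℝ) :
    HasDerivAt (fun x' : ℝ => activationFun c₃ c₄ η x' y)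
      ((1 / (2 * Real.pi) : ℂ) * ∫ θ : ℝ, greenKernel c₃ c₄ x y (θ * I)) x := by
  simp only [activationFun_eq]
  have h := (hasDerivAt_integral_greenKernel_div (c₃ := c₃) hc hη x).const_mul
    (1 / (2 * Real.pi) : ℂ)
  simpa [integral_greenKernel_vertical_eq hc x η 0] using h

theorem tendsto_activationFun_atBot (hc : 0 < c₄ * y) {η : ℝ} (hη : 0 < η) :
    Tendsto (fun x : ℝ => activationFun c₃ c₄ η x y) atBot (𝓝 0) := by
  obtain ⟨C, -, hC⟩ := norm_greenKernel_le (c₃ := c₃) hc η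
  set M := ‖(1 / (2 * Real.pi) : ℂ)‖ * ∫ θ : ℝ, C / η * Real.exp (-θ ^ 2)
  have hbound : ∀ x : ℝ, ‖activationFun c₃ c₄ η x y‖ ≤ Real.exp (x * η) * M := by
    intro x
    rw [activationFun_eq, norm_mul]
    calc _ ≤ ‖(1 / (2 * Real.pi) : ℂ)‖ *
          ∫ θ : ℝ, Real.exp (x * η) * (C / η * Real.exp (-θ ^ 2)) := by
          gcongr
          refine norm_integral_le_of_norm_le ((integrable_exp_neg_sq.const_mul _).const_mul _)
            (Eventually.of_forall fun θ => ?_)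
          calc ‖greenKernel c₃ c₄ x y (η + θ * I) / (η + θ * I)‖
              ≤ ‖greenKernel c₃ c₄ x y (η + θ * I)‖ / η := norm_div_le_of_le_re hη (by simp)
            _ ≤ C * Real.exp (x * η) * Real.exp (-θ ^ 2) / η := by
                gcongr; simpa using hC x ((η : ℂ) + θ * I) (by simp [abs_of_pos hη])
            _ = Real.exp (x * η) * (C / η * Real.exp (-θ ^ 2)) := by ring
      _ = Real.exp (x * η) * M := by rw [integral_const_mul]; ring
  refine squeeze_zero_norm hbound ?_
  simpa using (Real.tendsto_exp_atBot.comp (tendsto_id.atBot_mul_const hη)).mul_const M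

end greenKernel

/-- The activation function is independent of `η > 0`, is differentiable in `x` with
derivative `(1/2π) ∫_ℝ e^{ixθ} e^{-c₃y(iθ)³} e^{-c₄y(iθ)⁴} dθ`, and tends to `0`
as `x → -∞`. -/
theorem stmt_17 (c₃ c₄ : ℝ) (h4 : 0 < c₄) (y : ℝ) (hy : 0 < y) :
    (∀ η₁ η₂ : ℝ, 0 < η₁ → 0 < η₂ → ∀ x : ℝ,
      activationFun c₃ c₄ η₁ x y = activationFun c₃ c₄ η₂ x y) ∧
    (∀ η : ℝ, 0 < η → ∀ x : ℝ,
      HasDerivAt (fun x' : ℝ => activationFun c₃ c₄ η x' y)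
        ((1 / (2 * Real.pi) : ℂ) * ∫ θ : ℝ,
          Complex.exp (Complex.I * (x : ℂ) * (θ : ℂ)) *
            Complex.exp (-(c₃ : ℂ) * (y : ℂ) * (Complex.I * (θ : ℂ)) ^ 3) *
            Complex.exp (-(c₄ : ℂ) * (y : ℂ) * (Complex.I * (θ : ℂ)) ^ 4)) x) ∧
    (∀ η : ℝ, 0 < η →
      Tendsto (fun x : ℝ => activationFun c₃ c₄ η x y) atBot (nhds 0)) := by
  have hc : 0 < c₄ * y := mul_pos h4 hy
  refine ⟨fun η₁ η₂ h₁ h₂ x => ?_, fun η hη x => ?_,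
    fun η hη => tendsto_activationFun_atBot hc hη⟩
  · rw [activationFun_eq, activationFun_eq, integral_greenKernel_div_vertical_eq hc x h₁ h₂]
  · convert hasDerivAt_activationFun hc hη x using 4 with θ
    rw [greenKernel, mul_comm (θ : ℂ) I, mul_left_comm (x : ℂ) I, mul_assoc I]
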